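/- For integers n, k with 1 <= k < n, the number of flattened {1}-insertion parking functions of order n+1 with k runs satisfies f({1}; n+1, k) = f_{n+1, k} + sum_{i=1}^{n} binom(n, i) * f_{n-i+1, k-1}, where f_{m,j} denotes the number of flattened permutations of [m] with j runs. -/

import Mathlib

namespace FlatPF

/-- Decomposition of a word into maximal weakly increasing runs. -/
def runs : List ℕ → List (List ℕ)
  | [] => []
  | a :: l =>
    match runs l with
    | [] => [[a]]
    | [] :: rs => [a] :: rs
    | (b :: t) :: rs => if a ≤ b then (a :: b :: t) :: rs else [a] :: (b :: t) :: rs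

/-- The number of maximal weakly increasing runs of a word. -/
def numRuns (w : List ℕ) : ℕ := (runs w).length

/-- A word is flattened if the leading values of its runs are weakly increasing. -/
def IsFlattened (w : List ℕ) : Prop :=
  List.Chain' (· ≤ ·) ((runs w).map (fun r => r.headD 0))

/-- A word is a parking function: entries in `[m]` and the weakly increasing
rearrangement `(a'_1, …, a'_m)` satisfies `a'_i ≤ i`. -/
def IsPF (w : List ℕ) : Prop :=
  (∀ x ∈ w, 1 ≤ x ∧ x ≤ w.length) ∧
  ∀ i < w.length, (w.mergeSort (· ≤ ·)).getD i 0 ≤ i + 1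

/-- `w` is obtained by inserting the elements of the multiset `S` into some
permutation of `[n]`, keeping the letters of the permutation in relative order. -/
def IsInsertion (S : Multiset ℕ) (n : ℕ) (w : List ℕ) : Prop :=
  (↑w : Multiset ℕ) = ↑(List.range' 1 n) + S ∧
  ∃ p : List ℕ, p.Perm (List.range' 1 n) ∧ p.Sublist w

/-- Flattened `S`-insertion parking functions of order `n`. -/
def flatIns (S : Multiset ℕ) (n : ℕ) : Set (List ℕ) :=
  {w | IsInsertion S n w ∧ IsFlattened w}

/-- Flattened `S`-insertion parking functions of order `n` with exactly `k` runs. -/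
def flatInsK (S : Multiset ℕ) (n k : ℕ) : Set (List ℕ) :=
  {w | IsInsertion S n w ∧ IsFlattened w ∧ numRuns w = k}

/-- `f(S; n, k)`, the number of flattened `S`-insertion parking functions of order `n`
with exactly `k` runs.  In particular `fS 0 n k` is the number of flattened
permutations of `[n]` with `k` runs. -/
noncomputable def fS (S : Multiset ℕ) (n k : ℕ) : ℕ := (flatInsK S n k).ncard

end FlatPF

/-!
A flattened word starts with its smallest letter, so a flattened `{1}`-insertion word is
`1 A 1 B` with `1 ∉ A`. If `A ≠ []`, the second `1` starts a run; since run heads weakly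
increase, every earlier run head is `1`, so `1 A` is a single run and `A` is increasing.
Hence the words are partitioned by the set `A ⊆ {2, …, n+1}`, and those with a given `A` are
`1 A ++ u`, where `u` ranges over the flattened arrangements of `{1} ∪ ({2, …, n+1} \ A)`
(which start with `1`): `1 A ++ u` has the runs of `u` when `A = ∅`, and one extra run `1 A`
otherwise. An order-preserving relabelling of the letters preserves runs, so these
arrangements are counted by `f_{n-|A|+1, ·}`; grouping the sets `A` by size gives the
binomial coefficients.
-/

theorem List.splitBy_cons_cons_of_rel {α : Type*} {r : α → α → Bool} {a b : α}
    {t g : List α} {gs : List (List α)} (hab : r a b)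
    (h : (b :: t).splitBy r = (b :: g) :: gs) :
    (a :: b :: t).splitBy r = (a :: b :: g) :: gs := by
  have hmem : ∀ m ∈ gs, m ∈ (b :: t).splitBy r := fun m hm => h ▸ List.mem_cons_of_mem _ hm
  have hchain := List.isChain_getLast_head_splitBy r (b :: t)
  have hflat := List.flatten_splitBy r (b :: t)
  rw [h] at hchain hflat
  rw [List.splitBy_eq_iff]
  refine ⟨by simp [← hflat], ?_, ?_, ?_⟩
  · rintro (_ | ⟨_, hm⟩)
    exact List.nil_notMem_splitBy _ _ (hmem _ hm)
  · rintro m (_ | ⟨_, hm⟩)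
    · exact List.isChain_cons_cons.mpr
        ⟨hab, List.isChain_of_mem_splitBy (h ▸ List.mem_cons_self)⟩
    · exact List.isChain_of_mem_splitBy (hmem _ hm)
  · rw [List.isChain_cons] at hchain ⊢
    refine ⟨fun y hy => ?_, hchain.2⟩
    obtain ⟨_, hy0, hy⟩ := hchain.1 y hy
    exact ⟨List.cons_ne_nil _ _, hy0, by simpa using hy⟩

theorem List.map_headD_sublist_flatten {α : Type*} (d : α) {L : List (List α)}
    (hL : [] ∉ L) : (L.map (·.headD d)).Sublist L.flatten := by
  induction L with
  | nil => exact List.Sublist.slnil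
  | cons r L ih =>
    obtain ⟨a, r, rfl⟩ :=
      List.exists_cons_of_ne_nil (ne_of_mem_of_not_mem List.mem_cons_self hL)
    simpa using
      (ih fun h => hL (List.mem_cons_of_mem _ h)).trans (List.sublist_append_right r _)

theorem Set.ncard_eq_sum_ncard_fiberwise {α β : Type*} [DecidableEq β] {S : Set α}
    (hS : S.Finite) {f : α → β} {t : Finset β} (H : Set.MapsTo f S t) :
    S.ncard = ∑ b ∈ t, {x ∈ S | f x = b}.ncard := by
  classical
  rw [Set.ncard_eq_toFinset_card S hS,
    Finset.card_eq_sum_card_fiberwise fun x hx => H (hS.mem_toFinset.mp hx)]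
  refine Finset.sum_congr rfl fun b _ => ?_
  rw [← Set.ncard_coe_finset]
  congr
  ext
  simp

theorem Finset.sort_eq_nil_iff {α : Type*} [LinearOrder α] {t : Finset α} :
    t.sort = [] ↔ t = ∅ := by
  rw [← List.length_eq_zero_iff, Finset.length_sort, Finset.card_eq_zero]

namespace FlatPF

open List

theorem exists_runs_cons (a : ℕ) (l : List ℕ) : ∃ r rs, runs (a :: l) = (a :: r) :: rs := by
  rw [runs]
  rcases runs l with _ | ⟨_ | ⟨b, t⟩, rs⟩
  · exact ⟨[], [], rfl⟩
  · exact ⟨[], rs, rfl⟩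
  · by_cases hab : a ≤ b
    · exact ⟨b :: t, rs, by simp [hab]⟩
    · exact ⟨[], (b :: t) :: rs, by simp [hab]⟩

theorem runs_eq_splitBy (w : List ℕ) : runs w = w.splitBy (· ≤ ·) := by
  induction w with
  | nil => rfl
  | cons a l ih =>
    rcases l with _ | ⟨b, t⟩
    · rfl
    obtain ⟨g, gs, hbt⟩ := exists_runs_cons b t
    rw [hbt] at ih
    rw [runs, hbt]
    dsimp only
    split_ifs with hab
    · exact (splitBy_cons_cons_of_rel (by simpa using hab) ih.symm).symm
    · rw [ih]
      exact (splitBy_append_cons (l := [a]) t (by simpa using hab)).symm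

theorem flatten_runs (w : List ℕ) : (runs w).flatten = w := by
  simp [runs_eq_splitBy]

theorem nil_notMem_runs (w : List ℕ) : [] ∉ runs w := by
  rw [runs_eq_splitBy]; exact nil_notMem_splitBy _ _

theorem isChain_of_mem_runs {w r : List ℕ} (h : r ∈ runs w) : r.IsChain (· ≤ ·) := by
  rw [runs_eq_splitBy] at h; simpa using isChain_of_mem_splitBy h

theorem runs_of_isChain {l : List ℕ} (hn : l ≠ []) (h : l.IsChain (· ≤ ·)) :
    runs l = [l] := by
  rw [runs_eq_splitBy]; exact splitBy_of_isChain hn (by simpa using h)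

theorem runs_append {l m : List ℕ} (h : ∀ x ∈ l.getLast?, ∀ y ∈ m.head?, y < x) :
    runs (l ++ m) = runs l ++ runs m := by
  simp only [runs_eq_splitBy]
  exact splitBy_append fun x hx y hy => by simpa using h x hx y hy

theorem runs_cons_cons_of_le {a b : ℕ} (t : List ℕ) (hab : a ≤ b) :
    runs (a :: b :: t) = (runs (b :: t)).modifyHead (a :: ·) := by
  obtain ⟨r, rs, h⟩ := exists_runs_cons b t
  rw [runs, h]
  simp [hab]

theorem runs_cons_cons_of_lt {a b : ℕ} (t : List ℕ) (hba : b < a) :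
    runs (a :: b :: t) = [a] :: runs (b :: t) :=
  runs_append (l := [a]) (by simpa using hba)

theorem runs_map {f : ℕ → ℕ} {w : List ℕ} (hf : StrictMonoOn f {x | x ∈ w}) :
    runs (w.map f) = (runs w).map (map f) := by
  induction w with
  | nil => rfl
  | cons a l ih =>
    rcases l with _ | ⟨b, t⟩
    · rfl
    have ih := ih (hf.mono fun x hx => mem_cons_of_mem _ hx)
    have hfab : f a ≤ f b ↔ a ≤ b := hf.le_iff_le mem_cons_self (by simp)
    obtain ⟨r, rs, h⟩ := exists_runs_cons b t
    rw [h] at ih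
    simp only [map_cons] at ih ⊢
    rcases le_or_gt a b with hab | hba
    · rw [runs_cons_cons_of_le _ hab, runs_cons_cons_of_le _ (hfab.mpr hab), ih, h]
      simp
    · have hfba : f b < f a := lt_of_not_ge (hfab.not.mpr hba.not_ge)
      rw [runs_cons_cons_of_lt _ hba, runs_cons_cons_of_lt _ hfba, ih, h]
      simp

def runHeads (w : List ℕ) : List ℕ := (runs w).map (·.headD 0)

theorem isFlattened_iff_pairwise {w : List ℕ} :
    IsFlattened w ↔ (runHeads w).Pairwise (· ≤ ·) :=
  isChain_iff_pairwise

theorem length_runHeads (w : List ℕ) : (runHeads w).length = numRuns w :=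
  length_map _

theorem runHeads_sublist (w : List ℕ) : (runHeads w).Sublist w := by
  simpa only [runHeads, flatten_runs] using map_headD_sublist_flatten 0 (nil_notMem_runs w)

theorem exists_runHeads_cons (a : ℕ) (l : List ℕ) : ∃ hs, runHeads (a :: l) = a :: hs := by
  obtain ⟨r, rs, h⟩ := exists_runs_cons a l
  exact ⟨_, by rw [runHeads, h, map_cons, headD_cons]⟩

theorem runHeads_map {f : ℕ → ℕ} {w : List ℕ} (hf : StrictMonoOn f {x | x ∈ w}) :
    runHeads (w.map f) = (runHeads w).map f := by
  simp only [runHeads, runs_map hf, map_map]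
  refine map_congr_left fun r hr => ?_
  obtain ⟨a, r, rfl⟩ := exists_cons_of_ne_nil (ne_of_mem_of_not_mem hr (nil_notMem_runs w))
  rfl

theorem runHeads_cons_cons_self (a : ℕ) (l : List ℕ) :
    runHeads (a :: a :: l) = runHeads (a :: l) := by
  obtain ⟨r, rs, h⟩ := exists_runs_cons a l
  simp [runHeads, runs_cons_cons_of_le l le_rfl, h]

theorem IsFlattened.head_le {a : ℕ} {l : List ℕ} (hw : IsFlattened (a :: l)) :
    ∀ x ∈ a :: l, a ≤ x := by
  intro x hx
  rw [← flatten_runs (a :: l), mem_flatten] at hx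
  obtain ⟨r, hr, hxr⟩ := hx
  obtain ⟨c, r, rfl⟩ := exists_cons_of_ne_nil (ne_of_mem_of_not_mem hr (nil_notMem_runs _))
  have hcx : c ≤ x := by
    rcases mem_cons.mp hxr with rfl | hxr
    · exact le_rfl
    · exact rel_of_pairwise_cons (isChain_iff_pairwise.mp (isChain_of_mem_runs hr)) hxr
  have hc : c ∈ runHeads (a :: l) := mem_map.mpr ⟨_, hr, rfl⟩
  obtain ⟨hs, h⟩ := exists_runHeads_cons a l
  rw [isFlattened_iff_pairwise, h] at hw
  rw [h] at hc
  rcases mem_cons.mp hc with rfl | hc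
  · exact hcx
  · exact (rel_of_pairwise_cons hw hc).trans hcx

theorem isChain_of_forall_runHeads_le {a : ℕ} {l : List ℕ} (hgt : ∀ x ∈ l, a < x)
    (hle : ∀ x ∈ runHeads (a :: l), x ≤ a) : (a :: l).IsChain (· ≤ ·) := by
  obtain ⟨r, rs, h⟩ := exists_runs_cons a l
  have hsub : (rs.map (·.headD 0)).Sublist l := by
    simpa [runHeads, h] using runHeads_sublist (a :: l)
  obtain rfl : rs = [] := by
    rcases rs with _ | ⟨s, rs⟩
    · rfl
    have hs : s.headD 0 ≤ a := hle _ (by simp [runHeads, h])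
    exact absurd hs (hgt _ (hsub.subset mem_cons_self)).not_ge
  have hflat := flatten_runs (a :: l)
  rw [h, flatten_singleton] at hflat
  exact hflat ▸ isChain_of_mem_runs (h ▸ mem_cons_self)

section ConsAppendCons

variable {a : ℕ} {A : List ℕ}

theorem runs_cons_append_cons (hA0 : A ≠ []) (hgt : ∀ x ∈ A, a < x) (B : List ℕ) :
    runs (a :: A ++ a :: B) = runs (a :: A) ++ runs (a :: B) := by
  refine runs_append fun x hx y hy => ?_
  simp only [getLast?_cons, getLast?_eq_some_getLast hA0, Option.getD_some,
    Option.mem_def, Option.some.injEq, head?_cons] at hx hy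
  exact hy ▸ hx ▸ hgt _ (getLast_mem hA0)

theorem runHeads_cons_append_cons (hA : A.Pairwise (· ≤ ·)) (hgt : ∀ x ∈ A, a < x)
    (B : List ℕ) :
    runHeads (a :: A ++ a :: B) = (if A = [] then [] else [a]) ++ runHeads (a :: B) := by
  split_ifs with hA0
  · subst hA0; exact runHeads_cons_cons_self a B
  have hchain : (a :: A).IsChain (· ≤ ·) :=
    isChain_iff_pairwise.mpr (pairwise_cons.mpr ⟨fun x hx => (hgt x hx).le, hA⟩)
  rw [runHeads, runs_cons_append_cons hA0 hgt, runs_of_isChain (cons_ne_nil a A) hchain]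
  rfl

theorem isFlattened_cons_append_cons_iff (hA : A.Pairwise (· ≤ ·)) (hgt : ∀ x ∈ A, a < x)
    (B : List ℕ) : IsFlattened (a :: A ++ a :: B) ↔ IsFlattened (a :: B) := by
  obtain ⟨hs, h⟩ := exists_runHeads_cons a B
  change (runHeads _).IsChain _ ↔ (runHeads _).IsChain _
  rw [runHeads_cons_append_cons hA hgt, h]
  split_ifs <;> simp [isChain_cons_cons]

theorem numRuns_cons_append_cons (hA : A.Pairwise (· ≤ ·)) (hgt : ∀ x ∈ A, a < x)
    (B : List ℕ) :
    numRuns (a :: A ++ a :: B) = numRuns (a :: B) + if A = [] then 0 else 1 := by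
  rw [← length_runHeads, ← length_runHeads, runHeads_cons_append_cons hA hgt]
  split_ifs <;> simp

theorem pairwise_of_isFlattened_cons_append_cons {B : List ℕ}
    (hw : IsFlattened (a :: A ++ a :: B)) (hgt : ∀ x ∈ A, a < x) : A.Pairwise (· ≤ ·) := by
  suffices (a :: A).IsChain (· ≤ ·) from (pairwise_cons.mp (isChain_iff_pairwise.mp this)).2
  rcases eq_or_ne A [] with rfl | hA0
  · exact isChain_singleton a
  refine isChain_of_forall_runHeads_le hgt fun x hx => ?_
  have hsplit : runHeads (a :: A ++ a :: B) = runHeads (a :: A) ++ runHeads (a :: B) := by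
    rw [runHeads, runs_cons_append_cons hA0 hgt, map_append]; rfl
  obtain ⟨hs, h⟩ := exists_runHeads_cons a B
  rw [isFlattened_iff_pairwise, hsplit, h, pairwise_append] at hw
  exact hw.2.2 x hx a mem_cons_self

end ConsAppendCons

def flatWords (M : Multiset ℕ) (j : ℕ) : Set (List ℕ) :=
  {w | (w : Multiset ℕ) = M ∧ IsFlattened w ∧ numRuns w = j}

theorem flatWords_finite (M : Multiset ℕ) (j : ℕ) : (flatWords M j).Finite :=
  M.toList.permutations.finite_toSet.subset fun _ hw =>
    mem_permutations.mpr (Multiset.coe_eq_coe.mp (hw.1.trans M.coe_toList.symm))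

theorem isInsertion_iff {S : Multiset ℕ} {n : ℕ} {w : List ℕ} :
    IsInsertion S n w ↔ (w : Multiset ℕ) = ↑(range' 1 n) + S := by
  refine ⟨And.left, fun h => ⟨h, w.diff S.toList, ?_, diff_sublist _ _⟩⟩
  rw [← Multiset.coe_eq_coe, ← Multiset.coe_sub, h, Multiset.coe_toList, add_tsub_cancel_right]

theorem flatInsK_eq_flatWords (S : Multiset ℕ) (n k : ℕ) :
    flatInsK S n k = flatWords (↑(range' 1 n) + S) k := by
  ext w
  simp only [flatInsK, flatWords, isInsertion_iff]

theorem eq_cons_of_mem_flatWords {a j : ℕ} {M : Multiset ℕ} {u : List ℕ}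
    (hu : u ∈ flatWords (a ::ₘ M) j) (hM : ∀ x ∈ M, a ≤ x) : ∃ B, u = a :: B := by
  obtain ⟨hu, hflat, -⟩ := hu
  have hmem : a ∈ u := show a ∈ (u : Multiset ℕ) from hu ▸ Multiset.mem_cons_self a M
  obtain ⟨c, B, rfl⟩ := exists_cons_of_ne_nil (ne_nil_of_mem hmem)
  have hc : a ≤ c := by
    rcases Multiset.mem_cons.mp (show c ∈ a ::ₘ M from hu ▸ by simp) with h | h
    · exact h.ge
    · exact hM c h
  exact ⟨B, by rw [le_antisymm (hflat.head_le a hmem) hc]⟩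

section Relabel

variable {f : ℕ → ℕ}

theorem isFlattened_map_iff {w : List ℕ} (hf : StrictMonoOn f {x | x ∈ w}) :
    IsFlattened (w.map f) ↔ IsFlattened w := by
  rw [isFlattened_iff_pairwise, isFlattened_iff_pairwise, runHeads_map hf, pairwise_map]
  have hsub := (runHeads_sublist w).subset
  exact Pairwise.iff_of_mem fun hx hy => hf.le_iff_le (hsub hx) (hsub hy)

theorem numRuns_map {w : List ℕ} (hf : StrictMonoOn f {x | x ∈ w}) :
    numRuns (w.map f) = numRuns w := by
  simp [numRuns, runs_map hf]

theorem flatWords_map {M : Multiset ℕ} (hf : StrictMonoOn f {x | x ∈ M}) (j : ℕ) :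
    flatWords (M.map f) j = map f '' flatWords M j := by
  have hmono {u : List ℕ} (hu : (u : Multiset ℕ) = M) : StrictMonoOn f {x | x ∈ u} :=
    hf.mono fun x hx => show x ∈ M from hu ▸ hx
  ext v
  constructor
  · rintro ⟨hv, hflat, hruns⟩
    set g := Function.invFunOn f {x | x ∈ M}
    have hgf : ∀ x ∈ M, g (f x) = x := fun x hx => hf.injOn.leftInvOn_invFunOn hx
    have hfg : ∀ y ∈ v, f (g y) = y := by
      intro y hy
      obtain ⟨x, hx, rfl⟩ := Multiset.mem_map.mp (show y ∈ M.map f from hv ▸ hy)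
      rw [hgf x hx]
    have hvu : (v.map g).map f = v := by
      rw [map_map]; exact map_congr_left hfg |>.trans (map_id v)
    have hu : ((v.map g : List ℕ) : Multiset ℕ) = M := by
      rw [← Multiset.map_coe, hv, Multiset.map_map]
      exact (Multiset.map_congr rfl hgf).trans M.map_id
    refine ⟨v.map g, ⟨hu, ?_, ?_⟩, hvu⟩
    · rwa [← isFlattened_map_iff (hmono hu), hvu]
    · rwa [← numRuns_map (hmono hu), hvu]
  · rintro ⟨u, ⟨hu, hflat, hruns⟩, rfl⟩
    exact ⟨by rw [← Multiset.map_coe, hu], (isFlattened_map_iff (hmono hu)).mpr hflat,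
      (numRuns_map (hmono hu)).trans hruns⟩

theorem ncard_flatWords_map {M : Multiset ℕ} (hf : StrictMonoOn f {x | x ∈ M}) (j : ℕ) :
    (flatWords (M.map f) j).ncard = (flatWords M j).ncard := by
  rw [flatWords_map hf]
  refine Set.LeftInvOn.injOn (f₁' := map (Function.invFunOn f {x | x ∈ M})) (fun u hu => ?_)
    |>.ncard_image
  rw [map_map]
  refine (map_congr_left fun x hx => ?_).trans (map_id u)
  exact hf.injOn.leftInvOn_invFunOn (show x ∈ M from hu.1 ▸ hx)

end Relabel

theorem ncard_flatWords_of_sortedLT {L : List ℕ} (hL : L.SortedLT) (j : ℕ) :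
    (flatWords L j).ncard = (flatWords (Multiset.range L.length) j).ncard := by
  have hL' : (L : Multiset ℕ) = (Multiset.range L.length).map (L.getD · 0) := by
    rw [Multiset.range, Multiset.map_coe, Multiset.coe_eq_coe]
    refine .of_eq (ext_getElem (by simp) fun i h₁ h₂ => ?_)
    simp [getElem?_eq_getElem h₁]
  rw [hL', ncard_flatWords_map]
  intro i hi i' hi' hlt
  simp only [Set.mem_ofPred_eq, Multiset.mem_range] at hi hi'
  simpa [getD_eq_getElem, hi, hi', hL.getElem_lt_getElem_iff] using hlt

theorem fS_zero_eq (m j : ℕ) : fS 0 m j = (flatWords (Multiset.range m) j).ncard := by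
  rw [fS, flatInsK_eq_flatWords, add_zero,
    ncard_flatWords_of_sortedLT (sortedLT_range' 1 m one_ne_zero), length_range']

theorem ncard_flatWords_finset (s : Finset ℕ) (j : ℕ) :
    (flatWords s.val j).ncard = fS 0 s.card j := by
  rw [fS_zero_eq, ← s.sort_eq (· ≤ ·), ncard_flatWords_of_sortedLT s.sortedLT_sort,
    Finset.length_sort]

/-- For a word `a :: A ++ a :: B` with `a ∉ A`, the set of letters of `A`. -/
def lettersBetween (a : ℕ) (w : List ℕ) : Finset ℕ := (w.tail.takeWhile (· != a)).toFinset

theorem lettersBetween_cons_append_cons {a : ℕ} {A : List ℕ} (hA : a ∉ A) (B : List ℕ) :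
    lettersBetween a (a :: A ++ a :: B) = A.toFinset := by
  rw [lettersBetween, cons_append, tail_cons, takeWhile_append_of_pos, takeWhile_cons_of_neg]
  · simp
  · simp
  · intro x hx
    simpa using ne_of_mem_of_not_mem hx hA

section Decomposition

variable {a k : ℕ} {s t : Finset ℕ}

theorem lt_of_mem_sort (hs : ∀ x ∈ s, a < x) (ht : t ⊆ s) : ∀ x ∈ t.sort, a < x :=
  fun x hx => hs x (ht ((t.mem_sort _).mp hx))

theorem notMem_sort (hs : ∀ x ∈ s, a < x) (ht : t ⊆ s) : a ∉ t.sort :=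
  fun h => lt_irrefl a (lt_of_mem_sort hs ht a h)

theorem exists_eq_cons_sort_append_of_mem_flatWords (hs : ∀ x ∈ s, a < x) {w : List ℕ}
    (hw : w ∈ flatWords (a ::ₘ a ::ₘ s.val) k) :
    ∃ t ⊆ s, ∃ B, w = a :: t.sort ++ a :: B := by
  obtain ⟨l, rfl⟩ := eq_cons_of_mem_flatWords hw fun x hx => by
    rcases Multiset.mem_cons.mp hx with rfl | hx
    exacts [le_rfl, (hs x hx).le]
  obtain ⟨hl, hflat, -⟩ := hw
  rw [← Multiset.cons_coe, Multiset.cons_inj_right] at hl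
  obtain ⟨A, B, rfl⟩ :=
    append_of_mem (show a ∈ (l : Multiset ℕ) from hl ▸ Multiset.mem_cons_self a _)
  have hAB : (A : Multiset ℕ) + B = s.val := by
    rw [← Multiset.cons_inj_right a, ← hl]
    simpa using perm_middle.symm
  have hAs : (A : Multiset ℕ) ≤ s.val := hAB ▸ Multiset.le_add_right _ _
  have hgt : ∀ x ∈ A, a < x := fun x hx => hs x (Multiset.mem_of_le hAs hx)
  have hnd : A.Nodup := Multiset.nodup_of_le hAs s.nodup
  refine ⟨A.toFinset, fun x hx => Multiset.mem_of_le hAs (mem_toFinset.mp hx), B, ?_⟩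
  rw [(toFinset_sort _ hnd).mpr (pairwise_of_isFlattened_cons_append_cons hflat hgt)]
  rfl

theorem coe_cons_sort_append_eq_iff (ht : t ⊆ s) (u : List ℕ) :
    ((a :: t.sort ++ u : List ℕ) : Multiset ℕ) = a ::ₘ a ::ₘ s.val ↔
      (u : Multiset ℕ) = a ::ₘ (s \ t).val := by
  have hst : s.val = t.val + (s \ t).val := by
    rw [Finset.sdiff_val, add_tsub_cancel_of_le (Finset.val_le_iff.mpr ht)]
  rw [cons_append, ← Multiset.cons_coe, ← Multiset.coe_add, Finset.sort_eq,
    Multiset.cons_inj_right, hst, ← Multiset.add_cons, add_right_inj]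

theorem flatWords_fiber_eq_image (hs : ∀ x ∈ s, a < x) (ht : t ⊆ s) (hk : 1 ≤ k) :
    {w ∈ flatWords (a ::ₘ a ::ₘ s.val) k | lettersBetween a w = t} =
      (a :: t.sort ++ ·) '' flatWords (a ::ₘ (s \ t).val) (if t = ∅ then k else k - 1) := by
  have hsort := t.pairwise_sort (· ≤ ·)
  have hgt := lt_of_mem_sort hs ht
  ext w
  constructor
  · rintro ⟨hw, hlet⟩
    obtain ⟨t', ht', B, rfl⟩ := exists_eq_cons_sort_append_of_mem_flatWords hs hw
    obtain rfl : t' = t := by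
      rw [← hlet, lettersBetween_cons_append_cons (notMem_sort hs ht'), Finset.sort_toFinset]
    obtain ⟨hmul, hflat, hruns⟩ := hw
    refine ⟨a :: B, ⟨(coe_cons_sort_append_eq_iff ht _).mp hmul,
      (isFlattened_cons_append_cons_iff hsort hgt B).mp hflat, ?_⟩, rfl⟩
    simp only [numRuns_cons_append_cons hsort hgt, Finset.sort_eq_nil_iff] at hruns
    split_ifs at hruns ⊢ <;> omega
  · rintro ⟨u, hu, rfl⟩
    obtain ⟨B, rfl⟩ := eq_cons_of_mem_flatWords hu fun x hx =>
      (hs x (Finset.mem_sdiff.mp hx).1).le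
    obtain ⟨hmul, hflat, hruns⟩ := hu
    refine ⟨⟨(coe_cons_sort_append_eq_iff ht _).mpr hmul,
      (isFlattened_cons_append_cons_iff hsort hgt B).mpr hflat, ?_⟩, ?_⟩
    · simp only [numRuns_cons_append_cons hsort hgt, Finset.sort_eq_nil_iff, hruns]
      split_ifs <;> omega
    · rw [lettersBetween_cons_append_cons (notMem_sort hs ht), Finset.sort_toFinset]

theorem ncard_flatWords_fiber (hs : ∀ x ∈ s, a < x) (ht : t ⊆ s) (hk : 1 ≤ k) :
    {w ∈ flatWords (a ::ₘ a ::ₘ s.val) k | lettersBetween a w = t}.ncard =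
      fS 0 (s.card - t.card + 1) (if t = ∅ then k else k - 1) := by
  have has : a ∉ s \ t := fun h => lt_irrefl a (hs a (Finset.mem_sdiff.mp h).1)
  rw [flatWords_fiber_eq_image hs ht hk, (append_right_injective _).injOn.ncard_image,
    ← Finset.insert_val_of_notMem has, ncard_flatWords_finset,
    Finset.card_insert_of_notMem has, Finset.card_sdiff_of_subset ht]

theorem ncard_flatWords_cons_cons (hs : ∀ x ∈ s, a < x) (hk : 1 ≤ k) :
    (flatWords (a ::ₘ a ::ₘ s.val) k).ncard = ∑ i ∈ Finset.range (s.card + 1),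
      s.card.choose i * fS 0 (s.card - i + 1) (if i = 0 then k else k - 1) := by
  have H : Set.MapsTo (lettersBetween a) (flatWords (a ::ₘ a ::ₘ s.val) k) s.powerset := by
    intro w hw
    obtain ⟨t, ht, B, rfl⟩ := exists_eq_cons_sort_append_of_mem_flatWords hs hw
    rwa [Finset.mem_coe, lettersBetween_cons_append_cons (notMem_sort hs ht),
      Finset.sort_toFinset, Finset.mem_powerset]
  rw [Set.ncard_eq_sum_ncard_fiberwise (flatWords_finite _ _) H]
  refine (Finset.sum_congr rfl fun t ht => ?_).trans (Finset.sum_powerset_apply_card _)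
  rw [ncard_flatWords_fiber hs (Finset.mem_powerset.mp ht) hk]
  simp only [Finset.card_eq_zero]

end Decomposition

end FlatPF

open FlatPF in
theorem stmt13_general (n k : ℕ) (hk : 1 ≤ k) :
    fS {1} (n + 1) k =
      fS 0 (n + 1) k + ∑ i ∈ Finset.Icc 1 n, n.choose i * fS 0 (n - i + 1) (k - 1) := by
  have hs : ∀ x ∈ Finset.Icc 2 (n + 1), 1 < x := fun x hx => (Finset.mem_Icc.mp hx).1
  have hM : (↑(List.range' 1 (n + 1)) : Multiset ℕ) + {1} =
      1 ::ₘ 1 ::ₘ (Finset.Icc 2 (n + 1)).val := by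
    simp [Nat.Icc_eq_range', List.range'_succ, add_comm _ ({1} : Multiset ℕ),
      Multiset.singleton_add]
  rw [fS, flatInsK_eq_flatWords, hM, ncard_flatWords_cons_cons hs hk, Nat.card_Icc,
    show n + 1 + 1 - 2 = n from rfl, Finset.sum_range_eq_add_Ico _ n.succ_pos,
    Nat.succ_eq_add_one, Finset.Ico_add_one_right_eq_Icc]
  simp only [Nat.choose_zero_right, one_mul, Nat.sub_zero, if_true]
  congr 1
  refine Finset.sum_congr rfl fun i hi => ?_
  rw [if_neg (Nat.one_le_iff_ne_zero.mp (Finset.mem_Icc.mp hi).1)]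

open FlatPF in
/-- For `1 ≤ k < n`,
`f({1}; n+1, k) = f_{n+1,k} + ∑_{i=1}^{n} C(n,i) f_{n-i+1, k-1}`. -/
theorem stmt13 (n k : ℕ) (hk : 1 ≤ k) (hkn : k < n) :
    fS {1} (n + 1) k =
      fS 0 (n + 1) k + ∑ i ∈ Finset.Icc 1 n, n.choose i * fS 0 (n - i + 1) (k - 1) :=
  stmt13_general n k hk
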